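/- arXiv:1602.02252 — 2 statements merged into one kernel-verified Lean document; each statement's English description precedes it below -/
import Mathlib

section
/- Let A be a unital associative ℝ-algebra and w ∈ A with (1−w) invertible and w² = λ·1 for a real λ ≠ 1. Then with φ(w) = (1+w)(1−w)⁻¹, one has w·(φ(w) + φ(w)⁻¹ + 2) = φ(w) − φ(w)⁻¹. -/
/-! From `w ^ 2 = l • 1` we get `(1 - w) * (1 + w) = (1 + w) * (1 - w) = (1 - l) • 1`, so
`(1 - w)⁻¹ = (1 - l)⁻¹ • (1 + w)`, `φ(w) = (1 - l)⁻¹ • (1 + w) ^ 2` and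
`φ(w)⁻¹ = (1 - l)⁻¹ • (1 - w) ^ 2`. Writing also
`2 = (1 - l)⁻¹ • ((1 + w) * (1 - w) + (1 - w) * (1 + w))`,
`φ + φ⁻¹ + 2 = (1 - l)⁻¹ • ((1 + w) + (1 - w)) ^ 2 = (1 - l)⁻¹ • 4` and
`φ - φ⁻¹ = (1 - l)⁻¹ • 4 w`. -/

theorem Ring.inverse_eq_of_mul_eq_one {M₀ : Type*} [MonoidWithZero M₀] {a b : M₀}
    (hab : a * b = 1) (hba : b * a = 1) : Ring.inverse a = b :=
  Ring.inverse_unit ⟨a, b, hab, hba⟩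

section CayleyTransform

variable {𝕜 A : Type*} [Field 𝕜] [Ring A] [Algebra 𝕜 A] {w : A} {l : 𝕜}

noncomputable def cayley (w : A) : A := (1 + w) * Ring.inverse (1 - w)

theorem one_add_mul_one_sub_of_sq_eq_smul_one (hw : w ^ 2 = l • 1) :
    (1 + w) * (1 - w) = (1 - l) • 1 := by
  rw [sub_smul, one_smul, ← hw]
  noncomm_ring

theorem one_sub_mul_one_add_of_sq_eq_smul_one (hw : w ^ 2 = l • 1) :
    (1 - w) * (1 + w) = (1 - l) • 1 := by
  simpa only [sub_eq_add_neg, neg_neg] using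
    one_add_mul_one_sub_of_sq_eq_smul_one (w := -w) (by rwa [neg_sq])

theorem inverse_one_sub_of_sq_eq_smul_one (hw : w ^ 2 = l • 1) (hl : l ≠ 1) :
    Ring.inverse (1 - w) = (1 - l)⁻¹ • (1 + w) := by
  have hu : 1 - l ≠ 0 := sub_ne_zero.mpr hl.symm
  apply Ring.inverse_eq_of_mul_eq_one
  · rw [mul_smul_comm, one_sub_mul_one_add_of_sq_eq_smul_one hw, smul_smul, inv_mul_cancel₀ hu,
      one_smul]
  · rw [smul_mul_assoc, one_add_mul_one_sub_of_sq_eq_smul_one hw, smul_smul, inv_mul_cancel₀ hu,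
      one_smul]

theorem cayley_eq_smul_sq (hw : w ^ 2 = l • 1) (hl : l ≠ 1) :
    cayley w = (1 - l)⁻¹ • (1 + w) ^ 2 := by
  rw [cayley, inverse_one_sub_of_sq_eq_smul_one hw hl, mul_smul_comm, sq]

theorem smul_sq_mul_smul_sq_eq_one (hw : w ^ 2 = l • 1) (hl : l ≠ 1) :
    ((1 - l)⁻¹ • (1 + w) ^ 2) * ((1 - l)⁻¹ • (1 - w) ^ 2) = 1 := by
  have hu : 1 - l ≠ 0 := sub_ne_zero.mpr hl.symm
  have hcoeff : (1 - l)⁻¹ * (1 - l)⁻¹ * (1 - l) ^ 2 = 1 := by field_simp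
  rw [smul_mul_smul_comm, show (1 + w) ^ 2 * (1 - w) ^ 2 = ((1 + w) * (1 - w)) ^ 2 by noncomm_ring,
    one_add_mul_one_sub_of_sq_eq_smul_one hw, smul_pow, one_pow, smul_smul, hcoeff, one_smul]

theorem inverse_cayley_eq_smul_sq (hw : w ^ 2 = l • 1) (hl : l ≠ 1) :
    Ring.inverse (cayley w) = (1 - l)⁻¹ • (1 - w) ^ 2 := by
  rw [cayley_eq_smul_sq hw hl]
  refine Ring.inverse_eq_of_mul_eq_one (smul_sq_mul_smul_sq_eq_one hw hl) ?_
  simpa only [sub_eq_add_neg, neg_neg] using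
    smul_sq_mul_smul_sq_eq_one (w := -w) (by rwa [neg_sq]) hl

theorem mul_cayley_add_inverse_add_two (hw : w ^ 2 = l • 1) (hl : l ≠ 1) :
    w * (cayley w + Ring.inverse (cayley w) + 2) = cayley w - Ring.inverse (cayley w) := by
  have hu : 1 - l ≠ 0 := sub_ne_zero.mpr hl.symm
  have two_eq : (2 : A) = (1 - l)⁻¹ • ((1 + w) * (1 - w) + (1 - w) * (1 + w)) := by
    rw [one_add_mul_one_sub_of_sq_eq_smul_one hw, one_sub_mul_one_add_of_sq_eq_smul_one hw,
      ← smul_add, smul_smul, inv_mul_cancel₀ hu, one_smul, one_add_one_eq_two]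
  rw [inverse_cayley_eq_smul_sq hw hl, cayley_eq_smul_sq hw hl, two_eq, ← smul_add, ← smul_add,
    ← smul_sub, mul_smul_comm]
  congr 1
  noncomm_ring

end CayleyTransform

theorem stmt_6_general {A : Type*} [Ring A] [Algebra ℝ A] (w : A) (l : ℝ)
    (hw : w ^ 2 = l • (1 : A)) (hl : l ≠ 1) :
    w * ((1 + w) * Ring.inverse (1 - w) + Ring.inverse ((1 + w) * Ring.inverse (1 - w)) + 2) =
      (1 + w) * Ring.inverse (1 - w) - Ring.inverse ((1 + w) * Ring.inverse (1 - w)) :=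
  mul_cayley_add_inverse_add_two hw hl

/-- With φ(w) = (1+w)(1−w)⁻¹ and w² = λ•1, λ ≠ 1, one has
w·(φ(w) + φ(w)⁻¹ + 2) = φ(w) − φ(w)⁻¹. -/
theorem stmt_6 {A : Type*} [Ring A] [Algebra ℝ A] (w : A) (l : ℝ)
    (hw : w ^ 2 = l • (1 : A)) (hl : l ≠ 1) (hu : IsUnit (1 - w)) :
    w * ((1 + w) * Ring.inverse (1 - w) + Ring.inverse ((1 + w) * Ring.inverse (1 - w)) + 2) =
      (1 + w) * Ring.inverse (1 - w) - Ring.inverse ((1 + w) * Ring.inverse (1 - w)) :=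
  stmt_6_general w l hw hl
end

section
/- Let h > 0 and let D_h and ω, m be as in the discrete Dirac-Kähler setting, with χ_h(x) = Π_j (−1)^{x_j/h} e_{n+j}e_j. If f : (hℤ)^n → Cl(n,n) satisfies Σ_{j=1}^n [e_j (f(x+h e_j) − f(x−h e_j))/(2h) − e_{n+j}(f(x+h e_j) + f(x−h e_j))/(2h)] = −m_h(ω) f(x) for all x, where m_h(ω) = Σ_j (mω_j − 1/h) e_{n+j}, then g(x) = χ_h(x) f(x) satisfies (D_h − mω) g = 0, i.e., D_h g(x) = mω·g(x) for all x. -/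
/-!
Write `Γ = ∏ⱼ e_{n+j} e_j`, so that `χ_h(x) = σ(x) Γ` with the real sign `σ(x) = ∏ⱼ (-1)^{x_j}`.
Every generator anticommutes with `Γ` (it anticommutes with both factors of each `e_{n+k} e_k`,
`k ≠ j`, and with exactly one factor of `e_{n+j} e_j`), and `σ` flips under every unit shift.
Moving `χ_h` to the left through `D_h` therefore turns `D_h (χ_h f)` into `χ_h` applied to the
operator of the hypothesis minus `h⁻¹ Σⱼ e_{n+j} f`; the extra term cancels the `-1/h` in `m_h(ω)`
and leaves `mω`.
-/

open Finset

section Anticommute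

variable {ι A : Type*} [Ring A]

theorem Commute.mul_of_anticommute {x y a : A} (hx : x * a = -(a * x)) (hy : y * a = -(a * y)) :
    Commute (x * y) a := by
  rw [Commute, SemiconjBy, mul_assoc, hy, mul_neg, ← mul_assoc, hx, neg_mul, neg_neg, mul_assoc]

theorem List.prod_map_mul_eq_neg_of_anticommute (P : ι → A) {a : A} {k : ι}
    (hcomm : ∀ j ≠ k, Commute (P j) a) (hanti : P k * a = -(a * P k)) :
    ∀ {L : List ι}, L.Nodup → k ∈ L → (L.map P).prod * a = -(a * (L.map P).prod)
  | i :: t, hL, hk => by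
    obtain ⟨hit, ht⟩ := List.nodup_cons.mp hL
    rw [List.map_cons, List.prod_cons, mul_assoc]
    by_cases hik : i = k
    · subst hik
      have htail : Commute (t.map P).prod a := Commute.list_prod_left _ _ <| by
        simp only [List.mem_map]
        rintro _ ⟨j, hj, rfl⟩
        exact hcomm j (by rintro rfl; exact hit hj)
      rw [htail.eq, ← mul_assoc, hanti, neg_mul, mul_assoc]
    · have hkt : k ∈ t := (List.mem_cons.mp hk).resolve_left (Ne.symm hik)
      rw [prod_map_mul_eq_neg_of_anticommute P hcomm hanti ht hkt, mul_neg, ← mul_assoc,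
        (hcomm i hik).eq, mul_assoc]

end Anticommute

theorem List.prod_ofFn_smul {n : ℕ} {A R : Type*} [Monoid A] [CommMonoid R] [MulAction R A]
    [IsScalarTower R A A] [SMulCommClass R A A] (c : Fin n → R) (P : Fin n → A) :
    (List.ofFn fun i => c i • P i).prod = (∏ i, c i) • (List.ofFn P).prod := by
  induction n with
  | zero => simp
  | succ n ih =>
    rw [List.ofFn_succ, List.prod_cons, ih, Fin.prod_univ_succ, List.ofFn_succ, List.prod_cons,
      smul_mul_smul_comm]

theorem prod_zpow_add_single {ι K : Type*} [Fintype ι] [DecidableEq ι] [CommGroupWithZero K]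
    {a : K} (ha : a ≠ 0) (x : ι → ℤ) (j : ι) (d : ℤ) :
    ∏ i, a ^ ((x + Pi.single j d : ι → ℤ) i) = a ^ d * ∏ i, a ^ x i := by
  simp only [Pi.add_apply, zpow_add₀ ha, prod_mul_distrib, Pi.single_apply]
  simp [mul_comm]

section LatticeSign

variable {ι : Type*} [Fintype ι] [DecidableEq ι]

noncomputable def latticeSign (x : ι → ℤ) : ℝ := ∏ i, (-1 : ℝ) ^ x i

theorem latticeSign_add_single (x : ι → ℤ) (j : ι) :
    latticeSign (x + Pi.single j 1) = -latticeSign x := by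
  rw [latticeSign, latticeSign, prod_zpow_add_single (by norm_num), zpow_one, neg_one_mul]

theorem latticeSign_sub_single (x : ι → ℤ) (j : ι) :
    latticeSign (x - Pi.single j 1) = -latticeSign x := by
  rw [latticeSign, latticeSign, sub_eq_add_neg, ← Pi.single_neg,
    prod_zpow_add_single (by norm_num), zpow_neg_one, inv_neg, inv_one, neg_one_mul]

end LatticeSign

section Clifford

variable {n : ℕ} {A : Type*} [Ring A]

def chiralityElement (E F : Fin n → A) : A := (List.ofFn fun j => F j * E j).prod

variable {E F : Fin n → A}

theorem chiralityElement_mul_E (hEE : ∀ j k, j ≠ k → E j * E k = -(E k * E j))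
    (hEF : ∀ j k, E j * F k = -(F k * E j)) (k : Fin n) :
    chiralityElement E F * E k = -(E k * chiralityElement E F) := by
  rw [chiralityElement, List.ofFn_eq_map]
  refine List.prod_map_mul_eq_neg_of_anticommute _ (fun j hjk => ?_) ?_ (List.nodup_finRange n)
    (List.mem_finRange k)
  · exact Commute.mul_of_anticommute (by rw [hEF k j, neg_neg]) (hEE j k hjk)
  · rw [← mul_assoc (E k), hEF k k, neg_mul, neg_neg, mul_assoc]

theorem chiralityElement_mul_F (hEF : ∀ j k, E j * F k = -(F k * E j))
    (hFF : ∀ j k, j ≠ k → F j * F k = -(F k * F j)) (k : Fin n) :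
    chiralityElement E F * F k = -(F k * chiralityElement E F) := by
  rw [chiralityElement, List.ofFn_eq_map]
  refine List.prod_map_mul_eq_neg_of_anticommute _ (fun j hjk => ?_) ?_ (List.nodup_finRange n)
    (List.mem_finRange k)
  · exact Commute.mul_of_anticommute (hFF j k hjk) (hEF j k)
  · rw [mul_assoc, hEF k k, mul_neg]

variable [Algebra ℝ A]

theorem dirac_sign_twist {c : A} (hcE : ∀ j, E j * c = -(c * E j))
    (hcF : ∀ j, F j * c = -(c * F j)) {σ : (Fin n → ℤ) → ℝ}
    (hσ_add : ∀ x j, σ (x + Pi.single j 1) = -σ x) (hσ_sub : ∀ x j, σ (x - Pi.single j 1) = -σ x)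
    {f g : (Fin n → ℤ) → A} (hg : ∀ y, g y = σ y • (c * f y)) (h : ℝ) (x : Fin n → ℤ) :
    ∑ j, (E j * ((2 * h)⁻¹ • (g (x + Pi.single j 1) - g (x - Pi.single j 1)))
        + F j * ((2 * h)⁻¹ • (2 • g x - g (x + Pi.single j 1) - g (x - Pi.single j 1)))) =
      σ x • (c * (∑ j, (E j * ((2 * h)⁻¹ • (f (x + Pi.single j 1) - f (x - Pi.single j 1)))
        - F j * ((2 * h)⁻¹ • (f (x + Pi.single j 1) + f (x - Pi.single j 1))))
        - h⁻¹ • ∑ j, F j * f x)) := by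
  simp only [smul_sum, mul_sub, mul_sum, smul_sub, ← sum_sub_distrib]
  refine sum_congr rfl fun j _ => ?_
  simp only [hg, hσ_add, hσ_sub, smul_add, mul_add, mul_smul_comm, ← mul_assoc, hcE, hcF, neg_mul,
    two_smul]
  module

end Clifford

theorem stmt_19_general {n : ℕ} {A : Type*} [Ring A] [Algebra ℝ A]
    (E F : Fin n → A)
    (hEE : ∀ j k, E j * E k + E k * E j = if j = k then (-2 : A) else 0)
    (hEF : ∀ j k, E j * F k + F k * E j = 0)
    (hFF : ∀ j k, F j * F k + F k * F j = if j = k then (2 : A) else 0)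
    (h m : ℝ)
    (ω : Fin n → ℝ)
    (χ : (Fin n → ℤ) → A)
    (hχ : ∀ x, χ x = (List.ofFn fun j : Fin n => ((-1 : ℝ) ^ (x j)) • (F j * E j)).prod)
    (f g : (Fin n → ℤ) → A)
    (hf : ∀ x, ∑ j, (E j * ((2 * h)⁻¹ • (f (x + Pi.single j 1) - f (x - Pi.single j 1)))
        - F j * ((2 * h)⁻¹ • (f (x + Pi.single j 1) + f (x - Pi.single j 1)))) =
      -((∑ j, (m * ω j - 1 / h) • F j) * f x))
    (hg : ∀ x, g x = χ x * f x) :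
    ∀ x, (∑ j, (E j * ((2 * h)⁻¹ • (g (x + Pi.single j 1) - g (x - Pi.single j 1)))
        + F j * ((2 * h)⁻¹ • (2 • g x - g (x + Pi.single j 1) - g (x - Pi.single j 1))))) =
      (m • (∑ j, ω j • F j)) * g x := by
  intro x
  have hEE' : ∀ j k, j ≠ k → E j * E k = -(E k * E j) := fun j k hjk =>
    eq_neg_of_add_eq_zero_left (by simpa [hjk] using hEE j k)
  have hEF' : ∀ j k, E j * F k = -(F k * E j) := fun j k => eq_neg_of_add_eq_zero_left (hEF j k)
  have hFF' : ∀ j k, j ≠ k → F j * F k = -(F k * F j) := fun j k hjk =>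
    eq_neg_of_add_eq_zero_left (by simpa [hjk] using hFF j k)
  set Γ := chiralityElement E F
  have hΓE : ∀ j, E j * Γ = -(Γ * E j) := fun j =>
    neg_eq_iff_eq_neg.mp (chiralityElement_mul_E hEE' hEF' j).symm
  have hΓF : ∀ j, F j * Γ = -(Γ * F j) := fun j =>
    neg_eq_iff_eq_neg.mp (chiralityElement_mul_F hEF' hFF' j).symm
  have hχ_eq : ∀ y, χ y = latticeSign y • Γ := fun y => by
    rw [hχ, List.prod_ofFn_smul]; rfl
  rw [dirac_sign_twist hΓE hΓF latticeSign_add_single latticeSign_sub_single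
    (fun y => by rw [hg, hχ_eq, smul_mul_assoc]) h x, hf x, hg x, hχ_eq x]
  simp only [sum_mul, mul_sum, smul_sum, smul_mul_assoc, mul_smul_comm, ← mul_assoc, hΓF, neg_mul,
    ← sum_neg_distrib, ← sum_sub_distrib, smul_neg]
  refine sum_congr rfl fun j _ => ?_
  simp only [mul_assoc, mul_sub, mul_neg, mul_smul_comm]
  module

/-- If f satisfies Σ_j [e_j (f(x+e_j)−f(x−e_j))/(2h) − e_{n+j}(f(x+e_j)+f(x−e_j))/(2h)]
= −m_h(ω) f(x) with m_h(ω) = Σ_j (mω_j − 1/h) e_{n+j}, then g(x) = χ_h(x) f(x) is a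
null solution of D_h − mω, i.e. D_h g(x) = mω·g(x) for all x. -/
theorem stmt_19 {n : ℕ} {A : Type*} [Ring A] [Algebra ℝ A]
    (E F : Fin n → A)
    (hEE : ∀ j k, E j * E k + E k * E j = if j = k then (-2 : A) else 0)
    (hEF : ∀ j k, E j * F k + F k * E j = 0)
    (hFF : ∀ j k, F j * F k + F k * F j = if j = k then (2 : A) else 0)
    (h m : ℝ) (hh : 0 < h)
    (ω : Fin n → ℝ) (hω : ∑ j, (ω j) ^ 2 = 1)
    (χ : (Fin n → ℤ) → A)
    (hχ : ∀ x, χ x = (List.ofFn fun j : Fin n => ((-1 : ℝ) ^ (x j)) • (F j * E j)).prod)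
    (f g : (Fin n → ℤ) → A)
    (hf : ∀ x, ∑ j, (E j * ((2 * h)⁻¹ • (f (x + Pi.single j 1) - f (x - Pi.single j 1)))
        - F j * ((2 * h)⁻¹ • (f (x + Pi.single j 1) + f (x - Pi.single j 1)))) =
      -((∑ j, (m * ω j - 1 / h) • F j) * f x))
    (hg : ∀ x, g x = χ x * f x) :
    ∀ x, (∑ j, (E j * ((2 * h)⁻¹ • (g (x + Pi.single j 1) - g (x - Pi.single j 1)))
        + F j * ((2 * h)⁻¹ • (2 • g x - g (x + Pi.single j 1) - g (x - Pi.single j 1))))) =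
      (m • (∑ j, ω j • F j)) * g x :=
  stmt_19_general E F hEE hEF hFF h m ω χ hχ f g hf hg
end
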